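/- If Q is symmetric positive semidefinite, then λ_max(Q_z) ≤ λ_max(Q), where Q_z = Q − Q_d is the off-block-diagonal part of Q. -/

import Mathlib

open Matrix

noncomputable section

/-- The block-diagonal part `Q_d` of `Q` w.r.t. the partition of the index set given by
`blk` (the agent/block of each index): equal to `Q` on entries whose row and column
indices lie in the same block, zero elsewhere. -/
def blockDiagPart {N m : ℕ} (blk : Fin N → Fin m) (Q : Matrix (Fin N) (Fin N) ℝ) :
    Matrix (Fin N) (Fin N) ℝ :=
  Matrix.of fun p q => if blk p = blk q then Q p q else 0

/-- The largest eigenvalue of a real symmetric (Hermitian) matrix. -/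
noncomputable def maxEig {ι : Type*} [Fintype ι] [DecidableEq ι]
    {A : Matrix ι ι ℝ} (hA : A.IsHermitian) : ℝ :=
  ⨆ p, hA.eigenvalues p

/-!
The block-diagonal part `Q_d` is the Schur (entrywise) product of `Q` with the same-block
indicator matrix, which is a Gram matrix and hence positive semidefinite. By the Schur product
theorem `Q_d ⪰ 0`, i.e. `Q_z = Q - Q_d ⪯ Q` in the Loewner order. Finally `λ_max` is monotone for
the Loewner order, because `λ_max(A)` is the least `r` with `A ⪯ r • 1`.
-/

open scoped MatrixOrder ComplexOrder

section maxEig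

variable {ι : Type*} [Fintype ι] [DecidableEq ι] {A B : Matrix ι ι ℝ}

lemma le_algebraMap_maxEig (hA : A.IsHermitian) : A ≤ algebraMap ℝ _ (maxEig hA) := by
  refine le_algebraMap_of_spectrum_le ?_ hA
  rw [hA.spectrum_real_eq_range_eigenvalues]
  rintro _ ⟨i, rfl⟩
  exact le_ciSup (Set.finite_range _).bddAbove i

lemma maxEig_le_of_le_algebraMap [Nonempty ι] (hA : A.IsHermitian) {r : ℝ}
    (h : A ≤ algebraMap ℝ _ r) : maxEig hA ≤ r :=
  ciSup_le fun i ↦ (le_algebraMap_iff_spectrum_le hA).mp h _ (hA.eigenvalues_mem_spectrum_real i)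

lemma maxEig_mono (hA : A.IsHermitian) (hB : B.IsHermitian) (hAB : A ≤ B) :
    maxEig hA ≤ maxEig hB := by
  cases isEmpty_or_nonempty ι
  · simp [maxEig]
  · exact maxEig_le_of_le_algebraMap hA (hAB.trans (le_algebraMap_maxEig hB))

end maxEig

section sameBlock

variable {ι β 𝕜 : Type*} [Fintype ι] [Fintype β] [DecidableEq β] [RCLike 𝕜]

def sameBlockMatrix (blk : ι → β) : Matrix ι ι 𝕜 :=
  of fun p q ↦ if blk p = blk q then 1 else 0

lemma posSemidef_sameBlockMatrix (blk : ι → β) :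
    (sameBlockMatrix blk : Matrix ι ι 𝕜).PosSemidef := by
  convert posSemidef_conjTranspose_mul_self
    (of fun (b : β) p ↦ if blk p = b then (1 : 𝕜) else 0)
  ext p q
  simp [sameBlockMatrix, mul_apply, eq_comm]

end sameBlock

lemma blockDiagPart_eq_hadamard {N m : ℕ} (blk : Fin N → Fin m) (Q : Matrix (Fin N) (Fin N) ℝ) :
    blockDiagPart blk Q = Q ⊙ sameBlockMatrix blk := by
  ext p q
  simp [blockDiagPart, sameBlockMatrix]

lemma posSemidef_blockDiagPart {N m : ℕ} (blk : Fin N → Fin m) {Q : Matrix (Fin N) (Fin N) ℝ}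
    (hQ : Q.PosSemidef) : (blockDiagPart blk Q).PosSemidef := by
  rw [blockDiagPart_eq_hadamard]
  exact hQ.hadamard (posSemidef_sameBlockMatrix blk)

theorem stmt_7_general {N m : ℕ} (blk : Fin N → Fin m)
    (Q : Matrix (Fin N) (Fin N) ℝ) (hQ : Q.PosSemidef)
    (hQz : (Q - blockDiagPart blk Q).IsHermitian) :
    maxEig hQz ≤ maxEig hQ.1 :=
  maxEig_mono hQz hQ.1 <| by
    rw [Matrix.le_iff, sub_sub_cancel]
    exact posSemidef_blockDiagPart blk hQ

/-- If `Q` is symmetric positive semidefinite, then `λ_max(Q_z) ≤ λ_max(Q)`, where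
`Q_z = Q − Q_d` is the off-block-diagonal part of `Q`. -/
theorem stmt_7 {N m : ℕ} (hN : 0 < N) (blk : Fin N → Fin m)
    (Q : Matrix (Fin N) (Fin N) ℝ) (hQ : Q.PosSemidef)
    (hQz : (Q - blockDiagPart blk Q).IsHermitian) :
    maxEig hQz ≤ maxEig hQ.1 :=
  stmt_7_general blk Q hQ hQz
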